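/- arXiv:2305.02809 — 4 statements merged into one kernel-verified Lean document; each statement's English description precedes it below -/
import Mathlib

section
/- Let V be a real vector space, F : V → V a linear map, and v ∈ V an eigenvector of F (i.e. F(v) = λ·v for some λ ∈ ℝ). Then the dual space V* equipped with the bracket [ψ,φ]_{F,v} = φ(v)·F*(ψ) − ψ(v)·F*(φ) is a Lie algebra; in particular this bracket is bilinear, antisymmetric, and satisfies the Jacobi identity [[ψ,φ],ζ] + [[ζ,ψ],φ] + [[φ,ζ],ψ] = 0 for all ψ, φ, ζ ∈ V*. -/
/-- The bracket on the dual space `V*` associated with a linear map `F : V → V` and a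
vector `v ∈ V`: `[ψ,φ]_{F,v} = φ(v)·F*(ψ) − ψ(v)·F*(φ)`. -/
noncomputable def dualBracket {V : Type*} [AddCommGroup V] [Module ℝ V]
    (F : V →ₗ[ℝ] V) (v : V) (ψ φ : Module.Dual ℝ V) : Module.Dual ℝ V :=
  φ v • F.dualMap ψ - ψ v • F.dualMap φ

/-- If `v` is an eigenvector of `F`, then the bracket `[·,·]_{F,v}` on `V*` is bilinear,
antisymmetric and satisfies the Jacobi identity, i.e. it makes `V*` a Lie algebra. -/
theorem dualBracket_isLieBracket {V : Type*} [AddCommGroup V] [Module ℝ V]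
    (F : V →ₗ[ℝ] V) (v : V) (lam : ℝ) (hv : F v = lam • v) :
    (∀ (a b : ℝ) (ψ ψ' φ : Module.Dual ℝ V),
        dualBracket F v (a • ψ + b • ψ') φ =
          a • dualBracket F v ψ φ + b • dualBracket F v ψ' φ) ∧
    (∀ (a b : ℝ) (ψ φ φ' : Module.Dual ℝ V),
        dualBracket F v ψ (a • φ + b • φ') =
          a • dualBracket F v ψ φ + b • dualBracket F v ψ φ') ∧
    (∀ ψ φ : Module.Dual ℝ V, dualBracket F v ψ φ = - dualBracket F v φ ψ) ∧
    (∀ ψ φ ζ : Module.Dual ℝ V,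
        dualBracket F v (dualBracket F v ψ φ) ζ +
          dualBracket F v (dualBracket F v ζ ψ) φ +
          dualBracket F v (dualBracket F v φ ζ) ψ = 0) := by
  refine ⟨?_, ?_, ?_, ?_⟩
  · intro a b ψ ψ' φ
    ext x
    simp [dualBracket, smul_smul]
    try ring
  · intro a b ψ φ φ'
    ext x
    simp [dualBracket, smul_smul]
    try ring
  · intro ψ φ
    ext x
    simp [dualBracket]
    try ring
  · intro ψ φ ζ
    ext x
    simp [dualBracket, hv, smul_smul]
    try ring
end

section
/- Let V be a real vector space, F : V → V a linear map, and v ∈ V arbitrary (not necessarily an eigenvector). Then for all ψ, φ, ζ ∈ V*, the Jacobiator of the bracket [ψ,φ]_{F,v} = φ(v)·F*(ψ) − ψ(v)·F*(φ) satisfies the identity [[ψ,φ]_{F,v},ζ]_{F,v} + [[ζ,ψ]_{F,v},φ]_{F,v} + [[φ,ζ]_{F,v},ψ]_{F,v} = ψ(v)·φ(F(v))·F*(ζ) + ζ(F(v))·φ(v)·F*(ψ) + ψ(F(v))·ζ(v)·F*(φ) − ψ(F(v))·φ(v)·F*(ζ) − ζ(v)·φ(F(v))·F*(ψ) − ψ(v)·ζ(F(v))·F*(φ).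 -/
/-- For an arbitrary vector `v` (not necessarily an eigenvector), the Jacobiator of
`[·,·]_{F,v}` equals `(ι_v ∧ ι_{Fv} ∧ F*)(ψ,φ,ζ)`, written out explicitly. -/
theorem dualBracket_jacobiator {V : Type*} [AddCommGroup V] [Module ℝ V]
    (F : V →ₗ[ℝ] V) (v : V) (ψ φ ζ : Module.Dual ℝ V) :
    dualBracket F v (dualBracket F v ψ φ) ζ +
      dualBracket F v (dualBracket F v ζ ψ) φ +
      dualBracket F v (dualBracket F v φ ζ) ψ =
    (ψ v * φ (F v)) • F.dualMap ζ + (ζ (F v) * φ v) • F.dualMap ψ +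
      (ψ (F v) * ζ v) • F.dualMap φ - (ψ (F v) * φ v) • F.dualMap ζ -
      (ζ v * φ (F v)) • F.dualMap ψ - (ψ v * ζ (F v)) • F.dualMap φ := by
  simp only [dualBracket, LinearMap.dualMap_apply, map_sub, map_smul, LinearMap.sub_apply,
    LinearMap.smul_apply, smul_eq_mul, smul_sub, smul_smul]
  module
end

section
/- Let V be a real vector space, F : V → V a linear map, and v ∈ V such that the vectors v and F(v) are linearly independent. If the bracket [ψ,φ]_{F,v} = φ(v)·F*(ψ) − ψ(v)·F*(φ) satisfies the Jacobi identity for all ψ, φ, ζ ∈ V*, then F*(ψ) = 0 for every ψ ∈ V* with ψ(v) = 0 and ψ(F(v)) = 0. -/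
/-! Since `v` and `F v` are linearly independent, there are functionals `φ, ζ` dual to them.
For `ψ` vanishing on `v` and `F v`, the terms of the Jacobi sum of `ψ, φ, ζ` are
`[F*ψ, ζ] = 0`, `[0, φ] = 0` and `[-F*ζ, ψ] = F*ψ`, so the Jacobi identity forces `F*ψ = 0`. -/

theorem LinearIndependent.exists_dual_apply_eq_ite {K V ι : Type*} [Field K] [AddCommGroup V]
    [Module K V] [DecidableEq ι] {v : ι → V} (hv : LinearIndependent K v) :
    ∃ f : ι → Module.Dual K V, ∀ i j, f i (v j) = if j = i then 1 else 0 := by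
  choose f hf using fun i ↦ (Finsupp.lapply i ∘ₗ hv.repr).exists_extend
  refine ⟨f, fun i j ↦ ?_⟩
  have hvj : v j ∈ Submodule.span K (Set.range v) := Submodule.subset_span ⟨j, rfl⟩
  have := congr($(hf i) ⟨v j, hvj⟩)
  simp only [LinearMap.comp_apply, Submodule.subtype_apply, Finsupp.lapply_apply] at this
  rw [this, hv.repr_eq_single j _ rfl, Finsupp.single_apply]

theorem dualBracket_jacobi_eq_dualMap {V : Type*} [AddCommGroup V] [Module ℝ V]
    (F : V →ₗ[ℝ] V) (v : V) {ψ φ ζ : Module.Dual ℝ V}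
    (hψv : ψ v = 0) (hψF : ψ (F v) = 0) (hφv : φ v = 1) (hφF : φ (F v) = 0)
    (hζv : ζ v = 0) (hζF : ζ (F v) = 1) :
    dualBracket F v (dualBracket F v ψ φ) ζ + dualBracket F v (dualBracket F v ζ ψ) φ +
      dualBracket F v (dualBracket F v φ ζ) ψ = F.dualMap ψ := by
  simp only [dualBracket, map_sub, map_smul, LinearMap.dualMap_apply, smul_eq_mul,
    LinearMap.sub_apply, LinearMap.smul_apply, hψv, hψF, hφv, hφF, hζv, hζF]
  module

/-- If `v` and `F(v)` are linearly independent and `[·,·]_{F,v}` satisfies the Jacobi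
identity, then `F*(ψ) = 0` for every `ψ ∈ V*` vanishing on `v` and on `F(v)`. -/
theorem dualBracket_jacobi_linearIndependent {V : Type*} [AddCommGroup V] [Module ℝ V]
    (F : V →ₗ[ℝ] V) (v : V) (hli : LinearIndependent ℝ ![v, F v])
    (hJ : ∀ ψ φ ζ : Module.Dual ℝ V,
        dualBracket F v (dualBracket F v ψ φ) ζ +
          dualBracket F v (dualBracket F v ζ ψ) φ +
          dualBracket F v (dualBracket F v φ ζ) ψ = 0) :
    ∀ ψ : Module.Dual ℝ V, ψ v = 0 → ψ (F v) = 0 → F.dualMap ψ = 0 := by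
  intro ψ hψv hψF
  obtain ⟨f, hf⟩ := hli.exists_dual_apply_eq_ite
  have h0v : f 0 v = 1 := by simpa using hf 0 0
  have h0F : f 0 (F v) = 0 := by simpa using hf 0 1
  have h1v : f 1 v = 0 := by simpa using hf 1 0
  have h1F : f 1 (F v) = 1 := by simpa using hf 1 1
  rw [← dualBracket_jacobi_eq_dualMap F v hψv hψF h0v h0F h1v h1F, hJ]
end

section
/- Let V be a real vector space, F : V → V a linear map, and v ∈ V with F(v) = λ·v for some λ ∈ ℝ. Then for every k ≥ 1 and all ψ, φ, ζ₁, …, ζ_k ∈ V*, the iterated bracket satisfies [ … [[ψ,φ]_{F,v}, ζ₁]_{F,v}, …, ζ_k]_{F,v} = (∏_{i=1}^{k} ζ_i(v)) · ( φ(v)·(F*)^{k+1}(ψ) − ψ(v)·(F*)^{k+1}(φ) ), where [ψ,φ]_{F,v} = φ(v)·F*(ψ) − ψ(v)·F*(φ). -/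
section Aux

variable {V : Type*} [AddCommGroup V] [Module ℝ V]

lemma pow_dualMap_apply' (F : V →ₗ[ℝ] V) (j : ℕ) (ψ : Module.Dual ℝ V) (w : V) :
    (F.dualMap ^ j) ψ w = ψ ((F ^ j) w) := by
  induction j generalizing ψ with
  | zero => simp
  | succ n ih =>
    rw [pow_succ, Module.End.mul_apply, ih, pow_succ', Module.End.mul_apply]
    rfl

lemma dualBracket_eig (F : V →ₗ[ℝ] V) (v : V) (lam : ℝ) (hv : F v = lam • v)
    (j : ℕ) (ψ : Module.Dual ℝ V) :
    ((F.dualMap ^ j) ψ) v = lam ^ j * ψ v := by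
  have hpow : (F ^ j) v = lam ^ j • v := by
    induction j with
    | zero => simp
    | succ n ih =>
      rw [pow_succ, Module.End.mul_apply, hv, map_smul, ih, smul_smul, pow_succ]
      ring_nf
  rw [pow_dualMap_apply', hpow, map_smul, smul_eq_mul]

lemma dualBracket_aux (F : V →ₗ[ℝ] V) (v : V) (lam : ℝ) (hv : F v = lam • v)
    (ψ φ : Module.Dual ℝ V) :
    ∀ (l : List (Module.Dual ℝ V)) (c : ℝ) (j : ℕ),
    List.foldl (dualBracket F v)
      (c • (φ v • (F.dualMap ^ j) ψ - ψ v • (F.dualMap ^ j) φ)) l =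
      (c * (l.map (fun ζ => ζ v)).prod) •
        (φ v • (F.dualMap ^ (j + l.length)) ψ - ψ v • (F.dualMap ^ (j + l.length)) φ) := by
  intro l
  induction l with
  | nil => intro c j; simp
  | cons ζ t ih =>
    intro c j
    have step : dualBracket F v
        (c • (φ v • (F.dualMap ^ j) ψ - ψ v • (F.dualMap ^ j) φ)) ζ =
        (c * ζ v) • (φ v • (F.dualMap ^ (j+1)) ψ - ψ v • (F.dualMap ^ (j+1)) φ) := by
      have h1 : F.dualMap ((F.dualMap ^ j) ψ) = (F.dualMap ^ (j+1)) ψ := by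
        rw [pow_succ', Module.End.mul_apply]
      have h2 : F.dualMap ((F.dualMap ^ j) φ) = (F.dualMap ^ (j+1)) φ := by
        rw [pow_succ', Module.End.mul_apply]
      simp only [dualBracket, LinearMap.smul_apply, LinearMap.sub_apply, map_smul, map_sub,
        dualBracket_eig F v lam hv, h1, h2, smul_eq_mul, smul_sub, smul_smul]
      module
    rw [List.foldl_cons, step, ih (c * ζ v) (j+1)]
    simp only [List.map_cons, List.prod_cons, List.length_cons]
    ring_nf

end Aux

/-- If `F(v) = λ·v`, then the iterated bracket
`[…[[ψ,φ]_{F,v}, ζ₁]_{F,v}, …, ζ_k]_{F,v}` equals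
`(∏ᵢ ζᵢ(v)) · (φ(v)·(F*)^{k+1}(ψ) − ψ(v)·(F*)^{k+1}(φ))`. -/
theorem dualBracket_iterated {V : Type*} [AddCommGroup V] [Module ℝ V]
    (F : V →ₗ[ℝ] V) (v : V) (lam : ℝ) (hv : F v = lam • v)
    (k : ℕ) (hk : 1 ≤ k) (ψ φ : Module.Dual ℝ V) (ζ : Fin k → Module.Dual ℝ V) :
    List.foldl (dualBracket F v) (dualBracket F v ψ φ) (List.ofFn ζ) =
      (∏ i, ζ i v) •
        (φ v • (F.dualMap ^ (k + 1)) ψ - ψ v • (F.dualMap ^ (k + 1)) φ) := by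
  have h := dualBracket_aux F v lam hv ψ φ (List.ofFn ζ) 1 1
  simp only [one_smul, pow_one] at h
  rw [show dualBracket F v ψ φ = φ v • F.dualMap ψ - ψ v • F.dualMap φ from rfl, h]
  simp [List.map_ofFn, List.prod_ofFn, Function.comp, add_comm]
end
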